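/- Let G = (V, w) be a weighted graph, X = {u, v, z} ⊆ V a set of three distinct nodes, and X̃ ⊆ X. Let w̃ denote the weights of G' = flip_{X̃}(G). Define the triangle score ν̂_t(X) = min over x ∈ X of ( Σ_{y ∈ X\{x}} w̃(x,y) − min( ‖w^(x)‖ − Σ_{y ∈ X\{x}} |w(x,y)| , Σ_{y ∈ X\{x}} ( ‖w^(y)‖ − Σ_{z' ∈ X\{y}} |w(y,z')| ) ) ). If ν̂_t(X) > 0, then X is non-separable in G'; consequently, X̃ and X \ X̃ are non-separable in G, and for every a ∈ X̃ and b ∈ X \ X̃ the pair (a, b) is antipolar in G (ν_G({a,b}) < 0). -/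

import Mathlib

open Finset

variable {V : Type*}

/-- Cut capacity of a cut `S` in the weighted graph `(V, w)`:
`c(S) = Σ_{u ∈ S, v ∈ V \ S} w(u,v)`. -/
noncomputable def cutVal [Fintype V] [DecidableEq V] (w : V → V → ℝ) (S : Finset V) : ℝ :=
  ∑ u ∈ S, ∑ v ∈ Sᶜ, w u v

/-- Minimum cut value `MC(G) = min_{S ⊆ V} c(S)` (cuts range over all subsets). -/
noncomputable def minCutVal [Fintype V] [DecidableEq V] (w : V → V → ℝ) : ℝ :=
  sInf (Set.range (cutVal w))

/-- `S` separates `X` iff `X ∩ S ∉ {∅, X}`. -/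
def Separates [DecidableEq V] (S X : Finset V) : Prop :=
  X ∩ S ≠ ∅ ∧ X ∩ S ≠ X

/-- `X` is non-separable: no min-cut separates `X`. -/
def NonSepSet [Fintype V] [DecidableEq V] (w : V → V → ℝ) (X : Finset V) : Prop :=
  ∀ S : Finset V, cutVal w S = minCutVal w → ¬ Separates S X

/-- `X` is weakly non-separable: some min-cut separates `X` and some min-cut does not. -/
def WeakNonSepSet [Fintype V] [DecidableEq V] (w : V → V → ℝ) (X : Finset V) : Prop :=
  (∃ S : Finset V, cutVal w S = minCutVal w ∧ Separates S X) ∧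
  (∃ S : Finset V, cutVal w S = minCutVal w ∧ ¬ Separates S X)

/-- Non-separability index
`ν_G(X) = min_{S ⊆ V, S ⊖ X} c(S) − min_{S ⊆ V, ¬(S ⊖ X)} c(S)`. -/
noncomputable def nuIdx [Fintype V] [DecidableEq V] (w : V → V → ℝ) (X : Finset V) : ℝ :=
  sInf (cutVal w '' {S : Finset V | Separates S X}) -
  sInf (cutVal w '' {S : Finset V | ¬ Separates S X})

/-- `flip_T(G)`: negate the weight of each edge with exactly one endpoint in `T`. -/
noncomputable def flipSet [DecidableEq V] (w : V → V → ℝ) (T : Finset V) (a b : V) : ℝ :=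
  if (a ∈ T ∧ b ∉ T) ∨ (b ∈ T ∧ a ∉ T) then -w a b else w a b

/-!
Flipping the edges leaving `X̃` shifts every cut by a constant after a change of variables:
`c'(S) = c(S ∆ X̃) - c(X̃)`, computed pointwise on ordered pairs. Hence `S ↦ S ∆ X̃` maps the
min-cuts of `G` onto those of `G'`, and `X` being non-separable in `G'` says that every min-cut of
`G` meets `X` in `X̃` or in `X \ X̃`; this gives the three statements about `G`.

In `G'`, a cut separating the triangle `X` has one vertex `x` of `X` alone on its side. Moving `x`
to the other side, or moving the two other vertices of `X` to the side of `x`, gains the weight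
`∑ y, w̃(x,y)` of the triangle edges at `x` and loses at most the absolute weight of the edges
from the moved vertices to `V \ X`; positivity of the triangle score says one of the two moves
strictly decreases the cut.
-/

section

variable [DecidableEq V] {w : V → V → ℝ}

theorem flipSet_symm (hsymm : ∀ a b, w a b = w b a) (T : Finset V) (a b : V) :
    flipSet w T a b = flipSet w T b a := by
  unfold flipSet
  rw [hsymm a b]
  simp only [or_comm]

theorem abs_flipSet (w : V → V → ℝ) (T : Finset V) (a b : V) :
    |flipSet w T a b| = |w a b| := by
  unfold flipSet
  split <;> simp

theorem abs_sum_inter_sub_sum_sdiff_le (f : V → ℝ) (R S : Finset V) :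
    |∑ t ∈ R ∩ S, f t - ∑ t ∈ R \ S, f t| ≤ ∑ t ∈ R, |f t| := by
  rw [← Finset.sum_inter_add_sum_sdiff R S]
  refine (abs_sub _ _).trans (add_le_add ?_ ?_) <;> exact Finset.abs_sum_le_sum_abs _ _

theorem not_separates_iff {S X : Finset V} :
    ¬ Separates S X ↔ ∀ a ∈ X, ∀ b ∈ X, (a ∈ S ↔ b ∈ S) := by
  simp only [Separates, not_and_or, not_not, Finset.eq_empty_iff_forall_notMem,
    Finset.inter_eq_left, Finset.subset_iff, Finset.mem_inter]
  grind

variable [Fintype V]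

theorem cutVal_compl (hsymm : ∀ a b, w a b = w b a) (S : Finset V) :
    cutVal w Sᶜ = cutVal w S := by
  rw [cutVal, cutVal, compl_compl, Finset.sum_comm]
  simp only [hsymm]

theorem minCutVal_le_cutVal (w : V → V → ℝ) (S : Finset V) : minCutVal w ≤ cutVal w S :=
  csInf_le (Set.finite_range _).bddBelow ⟨S, rfl⟩

theorem exists_cutVal_eq_minCutVal (w : V → V → ℝ) : ∃ S, cutVal w S = minCutVal w :=
  (Set.range_nonempty _).csInf_mem (Set.finite_range _)

noncomputable def crossingSum (w : V → V → ℝ) (S : Finset V) : ℝ :=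
  ∑ a, ∑ b, if Xor (a ∈ S) (b ∈ S) then w a b else 0

theorem crossingSum_eq_two_mul_cutVal (hsymm : ∀ a b, w a b = w b a) (S : Finset V) :
    crossingSum w S = 2 * cutVal w S := by
  have hcut : cutVal w S = ∑ a, ∑ b, if a ∈ S ∧ b ∉ S then w a b else 0 := by
    simp [cutVal, ite_and, Finset.sum_ite, Finset.compl_eq_univ_sdiff, Finset.filter_not]
  have hcut' : cutVal w S = ∑ a, ∑ b, if b ∈ S ∧ a ∉ S then w a b else 0 := by
    rw [hcut, Finset.sum_comm]
    simp only [hsymm]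
  have hsplit : ∀ a b, (if Xor (a ∈ S) (b ∈ S) then w a b else 0) =
      (if a ∈ S ∧ b ∉ S then w a b else 0) + (if b ∈ S ∧ a ∉ S then w a b else 0) := by
    intro a b
    by_cases ha : a ∈ S <;> by_cases hb : b ∈ S <;> simp [Xor, ha, hb]
  simp only [crossingSum, hsplit, Finset.sum_add_distrib, ← hcut, ← hcut']
  ring

/-- Pointwise, with `s = [a ∈ S] ⊕ [b ∈ S]` and `t = [a ∈ T] ⊕ [b ∈ T]`, the identity is
`s (1 - 2t) = (s ⊕ t) - t`, where `s ⊕ t = [a ∈ S ∆ T] ⊕ [b ∈ S ∆ T]`. -/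
theorem crossingSum_flipSet (w : V → V → ℝ) (T S : Finset V) :
    crossingSum (flipSet w T) S = crossingSum w (symmDiff S T) - crossingSum w T := by
  simp only [crossingSum, ← Finset.sum_sub_distrib]
  refine Finset.sum_congr rfl fun a _ => Finset.sum_congr rfl fun b _ => ?_
  by_cases ha : a ∈ S <;> by_cases hb : b ∈ S <;> by_cases ha' : a ∈ T <;> by_cases hb' : b ∈ T <;>
    simp [flipSet, Xor, Finset.mem_symmDiff, ha, hb, ha', hb']

theorem cutVal_flipSet (hsymm : ∀ a b, w a b = w b a) (T S : Finset V) :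
    cutVal (flipSet w T) S = cutVal w (symmDiff S T) - cutVal w T := by
  have h := crossingSum_flipSet w T S
  rw [crossingSum_eq_two_mul_cutVal hsymm, crossingSum_eq_two_mul_cutVal hsymm,
    crossingSum_eq_two_mul_cutVal (flipSet_symm hsymm T)] at h
  linarith

theorem minCutVal_flipSet (hsymm : ∀ a b, w a b = w b a) (T : Finset V) :
    minCutVal (flipSet w T) = minCutVal w - cutVal w T := by
  apply le_antisymm
  · obtain ⟨S, hS⟩ := exists_cutVal_eq_minCutVal w
    calc minCutVal (flipSet w T) ≤ cutVal (flipSet w T) (symmDiff S T) :=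
          minCutVal_le_cutVal _ _
      _ = minCutVal w - cutVal w T := by
          rw [cutVal_flipSet hsymm, symmDiff_symmDiff_cancel_right, hS]
  · refine le_csInf (Set.range_nonempty _) ?_
    rintro _ ⟨S, rfl⟩
    rw [cutVal_flipSet hsymm]
    linarith [minCutVal_le_cutVal w (symmDiff S T)]

theorem cutVal_flipSet_symmDiff_eq_minCutVal (hsymm : ∀ a b, w a b = w b a) (T : Finset V)
    {S : Finset V} (hS : cutVal w S = minCutVal w) :
    cutVal (flipSet w T) (symmDiff S T) = minCutVal (flipSet w T) := by
  rw [cutVal_flipSet hsymm, symmDiff_symmDiff_cancel_right, hS, minCutVal_flipSet hsymm]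

theorem NonSepSet.mem_symmDiff_iff_of_flipSet (hsymm : ∀ a b, w a b = w b a) {T X S : Finset V}
    (hX : NonSepSet (flipSet w T) X) (hS : cutVal w S = minCutVal w) {a b : V}
    (ha : a ∈ X) (hb : b ∈ X) : a ∈ symmDiff S T ↔ b ∈ symmDiff S T :=
  not_separates_iff.mp (hX _ (cutVal_flipSet_symmDiff_eq_minCutVal hsymm T hS)) a ha b hb

theorem NonSepSet.of_flipSet_of_subset (hsymm : ∀ a b, w a b = w b a) {T X : Finset V}
    (hX : NonSepSet (flipSet w T) X) (hTX : T ⊆ X) : NonSepSet w T := by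
  intro S hS
  rw [not_separates_iff]
  intro a ha b hb
  have hab := hX.mem_symmDiff_iff_of_flipSet hsymm hS (hTX ha) (hTX hb)
  simp only [Finset.mem_symmDiff, ha, hb] at hab
  tauto

theorem NonSepSet.of_flipSet_sdiff (hsymm : ∀ a b, w a b = w b a) {T X : Finset V}
    (hX : NonSepSet (flipSet w T) X) : NonSepSet w (X \ T) := by
  intro S hS
  rw [not_separates_iff]
  intro a ha b hb
  rw [Finset.mem_sdiff] at ha hb
  simpa [Finset.mem_symmDiff, ha.2, hb.2] using hX.mem_symmDiff_iff_of_flipSet hsymm hS ha.1 hb.1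

theorem nuIdx_neg_of_forall_separates {X : Finset V}
    (hX : ∀ S, cutVal w S = minCutVal w → Separates S X) : nuIdx w X < 0 := by
  obtain ⟨S₀, hS₀⟩ := exists_cutVal_eq_minCutVal w
  have hsep : sInf (cutVal w '' {S | Separates S X}) ≤ minCutVal w :=
    csInf_le (Set.toFinite _).bddBelow ⟨S₀, hX S₀ hS₀, hS₀⟩
  have hne : (cutVal w '' {S | ¬ Separates S X}).Nonempty :=
    ⟨cutVal w ∅, ∅, by simp [Separates], rfl⟩
  obtain ⟨S₁, hS₁, hS₁eq⟩ := hne.csInf_mem (Set.toFinite _)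
  have hlt : minCutVal w < cutVal w S₁ :=
    (minCutVal_le_cutVal w S₁).lt_of_ne fun h => hS₁ (hX S₁ h.symm)
  rw [nuIdx, ← hS₁eq]
  linarith

theorem NonSepSet.nuIdx_pair_neg_of_flipSet (hsymm : ∀ a b, w a b = w b a) {T X : Finset V}
    (hX : NonSepSet (flipSet w T) X) (hTX : T ⊆ X) {a b : V} (ha : a ∈ T) (hb : b ∈ X \ T) :
    nuIdx w {a, b} < 0 := by
  rw [Finset.mem_sdiff] at hb
  refine nuIdx_neg_of_forall_separates fun S hS => ?_
  by_contra hpair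
  have hab := hX.mem_symmDiff_iff_of_flipSet hsymm hS (hTX ha) hb.1
  have hS' := not_separates_iff.mp hpair a (by simp) b (by simp)
  rw [Finset.mem_symmDiff, Finset.mem_symmDiff] at hab
  tauto

theorem cutVal_sdiff_of_subset (hsymm : ∀ a b, w a b = w b a) {A S : Finset V} (hAS : A ⊆ S) :
    cutVal w (S \ A) =
      cutVal w S - ∑ a ∈ A, (∑ b ∈ Sᶜ, w a b - ∑ b ∈ S \ A, w a b) := by
  have hcompl : (S \ A)ᶜ = Sᶜ ∪ A := by
    ext t; simp only [Finset.mem_compl, Finset.mem_sdiff, Finset.mem_union]; tauto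
  have hdisj : Disjoint Sᶜ A := Finset.disjoint_of_subset_right hAS disjoint_compl_left
  have hcross : ∑ u ∈ S \ A, ∑ a ∈ A, w u a = ∑ a ∈ A, ∑ b ∈ S \ A, w a b := by
    rw [Finset.sum_comm]
    simp only [hsymm]
  rw [cutVal, cutVal, hcompl, ← Finset.sum_sdiff hAS]
  simp only [Finset.sum_union hdisj, Finset.sum_add_distrib, Finset.sum_sub_distrib, hcross]
  ring

theorem cutVal_sdiff_singleton_le (hsymm : ∀ a b, w a b = w b a) {X S : Finset V} {x : V}
    (hXS : X ∩ S = {x}) :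
    cutVal w (S \ {x}) ≤ cutVal w S - ∑ y ∈ X \ {x}, w x y + ∑ t ∈ Xᶜ, |w x t| := by
  have hmem : ∀ t, t ∈ X ∧ t ∈ S ↔ t = x := by simpa [Finset.ext_iff] using hXS
  have hxS : x ∈ S := ((hmem x).mpr rfl).2
  have hin : Sᶜ ∩ X = X \ {x} := by
    ext t; simp only [Finset.mem_inter, Finset.mem_compl, Finset.mem_sdiff,
      Finset.mem_singleton]; grind
  have hout : Sᶜ \ X = Xᶜ \ S := by
    ext t; simp only [Finset.mem_sdiff, Finset.mem_compl]; tauto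
  have hrest : S \ {x} = Xᶜ ∩ S := by
    ext t; simp only [Finset.mem_inter, Finset.mem_compl, Finset.mem_sdiff,
      Finset.mem_singleton]; grind
  rw [cutVal_sdiff_of_subset hsymm (Finset.singleton_subset_iff.mpr hxS), Finset.sum_singleton,
    ← Finset.sum_inter_add_sum_sdiff Sᶜ X, hin, hout, hrest]
  linarith [le_of_abs_le (abs_sum_inter_sub_sum_sdiff_le (w x) Xᶜ S)]

theorem cutVal_union_sdiff_singleton_le (hsymm : ∀ a b, w a b = w b a) {X S : Finset V} {x : V}
    (hXS : X ∩ S = {x}) :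
    cutVal w (S ∪ (X \ {x})) ≤
      cutVal w S - ∑ y ∈ X \ {x}, w x y + ∑ y ∈ X \ {x}, ∑ t ∈ Xᶜ, |w y t| := by
  have hmem : ∀ t, t ∈ X ∧ t ∈ S ↔ t = x := by simpa [Finset.ext_iff] using hXS
  have hsub : X \ {x} ⊆ Sᶜ := by
    intro t; simp only [Finset.mem_sdiff, Finset.mem_singleton, Finset.mem_compl]; grind
  have hcompl : (S ∪ (X \ {x}))ᶜ = Sᶜ \ (X \ {x}) := by
    rw [Finset.compl_union, ← Finset.sdiff_eq_inter_compl]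
  have hout : Sᶜ \ (X \ {x}) = Xᶜ \ S := by
    ext t; simp only [Finset.mem_sdiff, Finset.mem_compl, Finset.mem_singleton]; grind
  have hin : S ∩ X = {x} := by rw [Finset.inter_comm, hXS]
  have hrest : S \ X = Xᶜ ∩ S := by
    ext t; simp only [Finset.mem_inter, Finset.mem_compl, Finset.mem_sdiff]; tauto
  have hy : ∀ y, w x y - ∑ t ∈ Xᶜ, |w y t| ≤ ∑ b ∈ Sᶜᶜ, w y b - ∑ b ∈ Sᶜ \ (X \ {x}), w y b := by
    intro y
    rw [compl_compl, ← Finset.sum_inter_add_sum_sdiff S X, hin, hout, hrest, Finset.sum_singleton,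
      hsymm x y]
    linarith [neg_le_of_abs_le (abs_sum_inter_sub_sum_sdiff_le (w y) Xᶜ S)]
  rw [← cutVal_compl hsymm, hcompl, cutVal_sdiff_of_subset hsymm hsub, cutVal_compl hsymm]
  have hsum := Finset.sum_le_sum fun y (_ : y ∈ X \ {x}) => hy y
  rw [Finset.sum_sub_distrib] at hsum
  linarith

theorem cutVal_ne_minCutVal_of_inter_eq_singleton (hsymm : ∀ a b, w a b = w b a)
    {X S : Finset V} {x : V} (hXS : X ∩ S = {x})
    (hx : min (∑ t ∈ Xᶜ, |w x t|) (∑ y ∈ X \ {x}, ∑ t ∈ Xᶜ, |w y t|) < ∑ y ∈ X \ {x}, w x y) :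
    cutVal w S ≠ minCutVal w := by
  intro hmin
  rcases min_lt_iff.mp hx with hout | hin
  · linarith [cutVal_sdiff_singleton_le hsymm hXS, minCutVal_le_cutVal w (S \ {x})]
  · linarith [cutVal_union_sdiff_singleton_le hsymm hXS, minCutVal_le_cutVal w (S ∪ (X \ {x}))]

theorem Separates.exists_inter_eq_singleton {S X : Finset V} (hSX : Separates S X)
    (hX : X.card ≤ 3) : ∃ x, X ∩ S = {x} ∨ X ∩ Sᶜ = {x} := by
  have hin : 0 < (X ∩ S).card := Finset.card_pos.mpr (Finset.nonempty_iff_ne_empty.mpr hSX.1)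
  have hout : 0 < (X ∩ Sᶜ).card := by
    rw [← Finset.sdiff_eq_inter_compl, Finset.card_pos, Finset.sdiff_nonempty]
    exact fun h => hSX.2 (Finset.inter_eq_left.mpr h)
  have hcard := Finset.card_inter_add_card_sdiff X S
  rw [Finset.sdiff_eq_inter_compl] at hcard
  have : (X ∩ S).card = 1 ∨ (X ∩ Sᶜ).card = 1 := by omega
  rcases this with h | h <;> obtain ⟨x, hx⟩ := Finset.card_eq_one.mp h
  exacts [⟨x, Or.inl hx⟩, ⟨x, Or.inr hx⟩]

theorem nonSepSet_of_forall_lt (hsymm : ∀ a b, w a b = w b a) {X : Finset V} (hX : X.card ≤ 3)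
    (hlt : ∀ x ∈ X, min (∑ t ∈ Xᶜ, |w x t|) (∑ y ∈ X \ {x}, ∑ t ∈ Xᶜ, |w y t|) <
      ∑ y ∈ X \ {x}, w x y) :
    NonSepSet w X := by
  intro S hS hSX
  obtain ⟨x, hx⟩ := hSX.exists_inter_eq_singleton hX
  have hxX : x ∈ X := by
    rcases hx with hx | hx <;> exact Finset.mem_of_mem_inter_left (hx ▸ Finset.mem_singleton_self x)
  rcases hx with hx | hx
  · exact cutVal_ne_minCutVal_of_inter_eq_singleton hsymm hx (hlt x hxX) hS
  · exact cutVal_ne_minCutVal_of_inter_eq_singleton hsymm hx (hlt x hxX)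
      (by rw [cutVal_compl hsymm, hS])

theorem sum_compl_le_sum_sub_sum_of_subset {g : V → ℝ} (hg : ∀ t, 0 ≤ g t) {s X : Finset V}
    (hsX : s ⊆ X) : ∑ t ∈ Xᶜ, g t ≤ ∑ t, g t - ∑ t ∈ s, g t := by
  rw [← Finset.sum_compl_add_sum X g]
  linarith [Finset.sum_le_sum_of_subset_of_nonneg hsX fun t _ _ => hg t]

theorem min_sum_abs_flipSet_lt_of_pos {T X : Finset V} {x : V}
    (h : 0 < ∑ y ∈ X \ {x}, flipSet w T x y -
      min ((∑ t, |w x t|) - ∑ y ∈ X \ {x}, |w x y|)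
        (∑ y ∈ X \ {x}, ((∑ t, |w y t|) - ∑ z ∈ X \ {y}, |w y z|))) :
    min (∑ t ∈ Xᶜ, |flipSet w T x t|) (∑ y ∈ X \ {x}, ∑ t ∈ Xᶜ, |flipSet w T y t|) <
      ∑ y ∈ X \ {x}, flipSet w T x y := by
  have hle (y : V) : ∑ t ∈ Xᶜ, |flipSet w T y t| ≤ ∑ t, |w y t| - ∑ z ∈ X \ {y}, |w y z| := by
    simp only [abs_flipSet]
    exact sum_compl_le_sum_sub_sum_of_subset (fun t => abs_nonneg _) Finset.sdiff_subset
  calc _ ≤ min ((∑ t, |w x t|) - ∑ y ∈ X \ {x}, |w x y|)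
        (∑ y ∈ X \ {x}, ((∑ t, |w y t|) - ∑ z ∈ X \ {y}, |w y z|)) :=
        min_le_min (hle x) (Finset.sum_le_sum fun y _ => hle y)
    _ < _ := by linarith

end

theorem statement_18_general [Fintype V] [DecidableEq V]
    (w : V → V → ℝ) (hsymm : ∀ a b, w a b = w b a)
    (u v z : V)
    (Xt : Finset V) (hXt : Xt ⊆ {u, v, z})
    (hpos : 0 < sInf ((fun x : V =>
        (∑ y ∈ ({u, v, z} : Finset V) \ {x}, flipSet w Xt x y) -
          min ((∑ t, |w x t|) - ∑ y ∈ ({u, v, z} : Finset V) \ {x}, |w x y|)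
              (∑ y ∈ ({u, v, z} : Finset V) \ {x},
                ((∑ t, |w y t|) - ∑ z' ∈ ({u, v, z} : Finset V) \ {y}, |w y z'|))) ''
      (({u, v, z} : Finset V) : Set V))) :
    NonSepSet (flipSet w Xt) {u, v, z} ∧
    NonSepSet w Xt ∧
    NonSepSet w (({u, v, z} : Finset V) \ Xt) ∧
    ∀ a ∈ Xt, ∀ b ∈ ({u, v, z} : Finset V) \ Xt, nuIdx w {a, b} < 0 := by
  have hflip : NonSepSet (flipSet w Xt) {u, v, z} :=
    nonSepSet_of_forall_lt (flipSet_symm hsymm Xt) Finset.card_le_three fun x hx =>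
      min_sum_abs_flipSet_lt_of_pos <|
        hpos.trans_le (csInf_le (Set.toFinite _).bddBelow ⟨x, hx, rfl⟩)
  exact ⟨hflip, hflip.of_flipSet_of_subset hsymm hXt, hflip.of_flipSet_sdiff hsymm,
    fun a ha b hb => hflip.nuIdx_pair_neg_of_flipSet hsymm hXt ha hb⟩

/-- for `X = {u,v,z}` (three distinct nodes) and `X̃ ⊆ X`, if the triangle
score `ν̂_t(X) > 0` then `X` is non-separable in `flip_{X̃}(G)`, the sets `X̃` and `X \ X̃`
are non-separable in `G`, and each pair `(a,b)` with `a ∈ X̃`, `b ∈ X \ X̃` is antipolar. -/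
theorem statement_18 [Fintype V] [DecidableEq V] [Nonempty V]
    (w : V → V → ℝ) (hsymm : ∀ a b, w a b = w b a) (hdiag : ∀ a, w a a = 0)
    (u v z : V) (huv : u ≠ v) (hvz : v ≠ z) (huz : u ≠ z)
    (Xt : Finset V) (hXt : Xt ⊆ {u, v, z})
    (hpos : 0 < sInf ((fun x : V =>
        (∑ y ∈ ({u, v, z} : Finset V) \ {x}, flipSet w Xt x y) -
          min ((∑ t, |w x t|) - ∑ y ∈ ({u, v, z} : Finset V) \ {x}, |w x y|)
              (∑ y ∈ ({u, v, z} : Finset V) \ {x},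
                ((∑ t, |w y t|) - ∑ z' ∈ ({u, v, z} : Finset V) \ {y}, |w y z'|))) ''
      (({u, v, z} : Finset V) : Set V))) :
    NonSepSet (flipSet w Xt) {u, v, z} ∧
    NonSepSet w Xt ∧
    NonSepSet w (({u, v, z} : Finset V) \ Xt) ∧
    ∀ a ∈ Xt, ∀ b ∈ ({u, v, z} : Finset V) \ Xt, nuIdx w {a, b} < 0 :=
  statement_18_general w hsymm u v z Xt hXt hpos
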